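/- arXiv:2503.23192 — 6 statements merged into one kernel-verified Lean document; each statement's English description precedes it below -/
import Mathlib

section
/- Let G be a finite abelian group and let φ: G₂ → G₁ be a surjective homomorphism of finite abelian groups whose kernel is a p-group (p an odd prime). Then the induced ring homomorphism ℤ_p[G₂] → ℤ_p[G₁] restricts to a surjective group homomorphism on unit groups ℤ_p[G₂]ˣ → ℤ_p[G₁]ˣ. -/
/-!
The induced map `ℤ_p[G₂] → ℤ_p[G₁]` is surjective, so it is enough that its kernel lies in the
Jacobson radical: then every preimage of a unit is a unit. Let `m` be a maximal ideal of
`ℤ_p[G₂]`. As `ℤ_p[G₂]` is finite over the local ring `ℤ_p`, `p ∈ m`, so `ℤ_p[G₂] ⧸ m` is a field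
of characteristic `p`, in which every `k ∈ ker φ` maps to `1` (since `k ^ p ^ n = 1` and Frobenius
is injective). Hence `ℤ_p[G₂] → ℤ_p[G₂] ⧸ m` factors through `ℤ_p[G₁]`, and the kernel of the
induced map lies in `m`.
-/

open MonoidAlgebra IsLocalRing

theorem MonoidAlgebra.mapDomain_surjective {R M N : Type*} [Semiring R] {f : M → N}
    (hf : Function.Surjective f) : Function.Surjective (mapDomain (R := R) f) :=
  coeffEquiv.symm.surjective.comp ((Finsupp.mapDomain_surjective hf).comp coeffEquiv.surjective)

theorem isLocalHom_of_surjective_of_ker_le_jacobson {R S : Type*} [CommRing R] [CommRing S]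
    {f : R →+* S} (hf : Function.Surjective f) (hker : RingHom.ker f ≤ Ideal.jacobson ⊥) :
    IsLocalHom f := by
  have := isLocalHom_of_le_jacobson_bot _ hker
  have : f = (RingHom.quotientKerEquivOfSurjective hf : _ →+* S).comp
      (Ideal.Quotient.mk (RingHom.ker f)) := by
    ext x; rfl
  rw [this]
  infer_instance

theorem algebraMap_mem_of_isMaximal {R A : Type*} [CommRing R] [IsLocalRing R] [CommRing A]
    [Algebra R A] [Algebra.IsIntegral R A] (m : Ideal A) [m.IsMaximal] {r : R}
    (hr : r ∈ maximalIdeal R) : algebraMap R A r ∈ m := by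
  have : (m.comap (algebraMap R A)).IsMaximal := Ideal.isMaximal_comap_of_isIntegral_of_isMaximal m
  rwa [← Ideal.mem_comap, eq_maximalIdeal this]

theorem eq_one_of_pow_expChar_pow_eq_one {K : Type*} [CommRing K] [IsReduced K] (p : ℕ)
    [ExpChar K p] {x : K} {n : ℕ} (hx : x ^ p ^ n = 1) : x = 1 :=
  iterateFrobenius_inj K p n (by simpa [iterateFrobenius_def] using hx)

theorem MonoidAlgebra.ker_mapDomainAlgHom_le_ker {R A G H : Type*} [CommSemiring R] [Semiring A]
    [Algebra R A] [Group G] [Group H] {φ : G →* H} (hφ : Function.Surjective φ)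
    (π : MonoidAlgebra R G →ₐ[R] A) (hπ : ∀ k ∈ φ.ker, π (single k 1) = 1) :
    RingHom.ker (mapDomainAlgHom R R φ) ≤ RingHom.ker π := by
  set e := QuotientGroup.quotientKerEquivOfSurjective φ hφ
  set ρ : G →* A := (π : MonoidAlgebra R G →* A).comp (of R G)
  set ψ := lift R A H ((QuotientGroup.lift φ.ker ρ hπ).comp e.symm.toMonoidHom)
  have hψ : ψ.comp (mapDomainAlgHom R R φ) = π := by
    refine algHom_ext (fun g => ?_) (Subsingleton.elim _ _)
    have hg : e.symm (φ g) = g := e.symm_apply_eq.2 rfl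
    simp only [ψ, AlgHom.comp_apply, mapDomainAlgHom_apply, mapDomain_single, lift_single,
      MonoidHom.comp_apply, MulEquiv.coe_toMonoidHom, hg, one_smul]
    rfl
  intro a ha
  rw [RingHom.mem_ker] at ha ⊢
  rw [← hψ, AlgHom.comp_apply, ha, map_zero]

theorem MonoidAlgebra.ker_mapDomainRingHom_le_jacobson {R G H : Type*} [CommRing R] [IsLocalRing R]
    [CommGroup G] [Finite G] [Group H] (p : ℕ) [Fact p.Prime] (hpR : (p : R) ∈ maximalIdeal R)
    {φ : G →* H} (hφ : Function.Surjective φ) (hker : IsPGroup p φ.ker) :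
    RingHom.ker (mapDomainRingHom R φ) ≤ Ideal.jacobson ⊥ := by
  intro a ha
  refine Ideal.mem_sInf.2 fun m ⟨_, hm⟩ => ?_
  let K := MonoidAlgebra R G ⧸ m
  let : Field K := Ideal.Quotient.field m
  have hpK : (p : K) = 0 := by
    simpa using Ideal.Quotient.eq_zero_iff_mem.2 (algebraMap_mem_of_isMaximal m hpR)
  have : CharP K p := (CharP.charP_iff_prime_eq_zero Fact.out).2 hpK
  have hπ : ∀ k ∈ φ.ker, Ideal.Quotient.mkₐ R m (single k 1) = 1 := by
    intro k hk
    obtain ⟨n, hn⟩ := hker ⟨k, hk⟩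
    refine eq_one_of_pow_expChar_pow_eq_one p (n := n) ?_
    rw [← map_pow, single_pow, one_pow, show k ^ p ^ n = 1 from congrArg Subtype.val hn,
      ← one_def, map_one]
  exact Ideal.Quotient.eq_zero_iff_mem.1 (ker_mapDomainAlgHom_le_ker hφ _ hπ ha)

theorem induced_unit_map_surjective_general
    (p : ℕ) [Fact p.Prime]
    (G₁ G₂ : Type*) [CommGroup G₁] [CommGroup G₂] [Finite G₂]
    (φ : G₂ →* G₁) (hφ : Function.Surjective φ)
    (hker : IsPGroup p φ.ker) :
    Function.Surjective
      (Units.map ((MonoidAlgebra.mapDomainRingHom ℤ_[p] φ : MonoidAlgebra ℤ_[p] G₂ →+* MonoidAlgebra ℤ_[p] G₁) : MonoidAlgebra ℤ_[p] G₂ →* MonoidAlgebra ℤ_[p] G₁)) := by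
  have hsurj : Function.Surjective (mapDomainRingHom ℤ_[p] φ) := mapDomain_surjective hφ
  exact surjective_units_map_of_local_ringHom _ hsurj <|
    isLocalHom_of_surjective_of_ker_le_jacobson hsurj <|
      ker_mapDomainRingHom_le_jacobson p PadicInt.p_nonunit hφ hker

/-- If `φ : G₂ → G₁` is a surjective homomorphism of finite abelian
groups whose kernel is a `p`-group (`p` an odd prime), then the induced ring homomorphism
`ℤ_p[G₂] → ℤ_p[G₁]` is surjective on unit groups. -/
theorem induced_unit_map_surjective
    (p : ℕ) [Fact p.Prime] (hp : Odd p)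
    (G₁ G₂ : Type*) [CommGroup G₁] [CommGroup G₂] [Finite G₁] [Finite G₂]
    (φ : G₂ →* G₁) (hφ : Function.Surjective φ)
    (hker : IsPGroup p φ.ker) :
    Function.Surjective
      (Units.map ((MonoidAlgebra.mapDomainRingHom ℤ_[p] φ : MonoidAlgebra ℤ_[p] G₂ →+* MonoidAlgebra ℤ_[p] G₁) : MonoidAlgebra ℤ_[p] G₂ →* MonoidAlgebra ℤ_[p] G₁)) :=
  induced_unit_map_surjective_general p G₁ G₂ φ hφ hker
end

section
/- Let R be a commutative ring and M an R-module with a presentation P₁ → P₀ → M → 0 where P₀ and P₁ are finitely generated projective R-modules having equal rank after localization at every maximal ideal. Then the 0-th Fitting ideal of M is locally principal: for every prime ideal 𝔪 of R, Fitt_R(M)_𝔪 = det(ρ_𝔪)·R_𝔪, where ρ_𝔪 is the localization of the presenting map. -/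
/-- The 0-th Fitting ideal of a module `M` over a commutative ring `R`. -/
def fittingIdeal0 (R : Type*) [CommRing R] (M : Type*) [AddCommGroup M] [Module R M] :
    Ideal R :=
  Ideal.span { r : R | ∃ (n : ℕ) (π : (Fin n → R) →ₗ[R] M) (A : Matrix (Fin n) (Fin n) R),
    Function.Surjective π ∧ (∀ j, π (fun i => A i j) = 0) ∧ r = A.det }

/-!
For a finite generating family `v` of a module, the ideal spanned by the determinants of square
matrices whose columns are relations among the `v i` does not depend on `v`: adjoining a
generator `y = ∑ a i • v i` changes nothing, since adding `a i` times the row of `y` to the row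
of `v i` makes all other rows relations among the `v i`, and a Laplace expansion along the row of
`y` concludes. Hence this ideal is `Fitt_0`. Relations over a localization `S⁻¹R` come from
relations over `R` after clearing denominators, so `Fitt_0` commutes with localization.
At a prime `𝔪` the localized `P₀`, `P₁` are free, and of equal rank since the rank of a finite
flat module is constant along specializations. For the generators `g (b₀ i)` of `M_𝔪`, a
relation matrix is exactly a matrix `T * C` with `T` the matrix of `ρ_𝔪`, so its determinant is a
multiple of `det T`.
-/

open Matrix

section RelationDetIdeal

variable {A N : Type*} [CommRing A] [AddCommGroup N] [Module A N]

variable (A) in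
def relationDetIdeal {ι : Type*} [Fintype ι] [DecidableEq ι] (v : ι → N) : Ideal A :=
  Ideal.span {r | ∃ B : Matrix ι ι A, (∀ j, ∑ i, B i j • v i = 0) ∧ r = B.det}

section Fintype

variable {ι κ : Type*} [Fintype ι] [DecidableEq ι] [Fintype κ] [DecidableEq κ] {v : ι → N}

theorem det_mem_relationDetIdeal (B : Matrix ι ι A) (hB : ∀ j, ∑ i, B i j • v i = 0) :
    B.det ∈ relationDetIdeal A v :=
  Ideal.subset_span ⟨B, hB, rfl⟩

theorem relationDetIdeal_le {I : Ideal A}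
    (h : ∀ B : Matrix ι ι A, (∀ j, ∑ i, B i j • v i = 0) → B.det ∈ I) :
    relationDetIdeal A v ≤ I :=
  Ideal.span_le.mpr <| by rintro _ ⟨B, hB, rfl⟩; exact h B hB

theorem relationDetIdeal_comp_equiv_le (v : ι → N) (e : κ ≃ ι) :
    relationDetIdeal A (v ∘ e) ≤ relationDetIdeal A v :=
  relationDetIdeal_le fun B hB => by
    rw [← det_submatrix_equiv_self e.symm B]
    refine det_mem_relationDetIdeal _ fun j => ?_
    rw [← e.sum_comp]
    simpa using hB (e.symm j)

theorem relationDetIdeal_comp_equiv (v : ι → N) (e : κ ≃ ι) :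
    relationDetIdeal A (v ∘ e) = relationDetIdeal A v := by
  refine le_antisymm (relationDetIdeal_comp_equiv_le v e) ?_
  simpa [Function.comp_assoc] using relationDetIdeal_comp_equiv_le (A := A) (v ∘ e) e.symm

end Fintype

section Fin

variable {k : ℕ} {v : Fin k → N} {y : N}

theorem relationDetIdeal_cons_le (hy : y ∈ Submodule.span A (Set.range v)) :
    relationDetIdeal A (Fin.cons y v : Fin (k + 1) → N) ≤ relationDetIdeal A v := by
  obtain ⟨a, rfl⟩ := (Submodule.mem_span_range_iff_exists_fun A).mp hy
  refine relationDetIdeal_le fun B hB => ?_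
  -- Adding `a i` times row `0` to row `i + 1` turns the lower rows into relations of `v`.
  let c : Fin (k + 1) → A := Fin.cons 0 a
  let B' : Matrix (Fin (k + 1)) (Fin (k + 1)) A := of fun i j => B i j + c i * B 0 j
  have hB' : ∀ j, ∑ i, B' i.succ j • v i = 0 := fun j => by
    have := hB j
    rw [Fin.sum_univ_succ] at this
    simpa [B', c, add_smul, mul_comm (a _), mul_smul, Finset.sum_add_distrib, ← Finset.smul_sum,
      add_comm] using this
  rw [← det_eq_of_forall_row_eq_smul_add_const (A := B') c 0 rfl fun _ _ => rfl,
    det_succ_row_zero]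
  exact Ideal.sum_mem _ fun j _ =>
    Ideal.mul_mem_left _ _ (det_mem_relationDetIdeal _ fun l => hB' _)

theorem relationDetIdeal_le_cons (hy : y ∈ Submodule.span A (Set.range v)) :
    relationDetIdeal A v ≤ relationDetIdeal A (Fin.cons y v : Fin (k + 1) → N) := by
  obtain ⟨a, ha⟩ := (Submodule.mem_span_range_iff_exists_fun A).mp hy
  refine relationDetIdeal_le fun B hB => ?_
  -- Border `B` by the relation `-y + ∑ i, a i • v i = 0` of `Fin.cons y v`.
  let col : Fin (k + 1) → Fin (k + 1) → A :=
    Fin.cons (Fin.cons (-1) a) fun j => Fin.cons 0 (B · j)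
  have hcol : ∀ j, ∑ i, col j i • (Fin.cons y v : Fin (k + 1) → N) i = 0 :=
    Fin.cases (by simp [col, Fin.sum_univ_succ, ha]) fun j => by
      simpa [col, Fin.sum_univ_succ] using hB j
  have hdet : (of fun i j => col j i).det = -B.det := by
    simp only [det_succ_row_zero, Fin.sum_univ_succ, col, of_apply, submatrix, Fin.cons_zero,
      Fin.cons_succ, Fin.zero_succAbove, Fin.val_zero, Fin.val_succ, pow_zero, one_mul, mul_neg,
      mul_one, neg_mul, mul_zero, zero_mul, Finset.sum_const_zero, add_zero]
    rfl
  rw [← neg_neg B.det, ← hdet]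
  exact neg_mem (det_mem_relationDetIdeal _ hcol)

theorem relationDetIdeal_cons (hy : y ∈ Submodule.span A (Set.range v)) :
    relationDetIdeal A (Fin.cons y v : Fin (k + 1) → N) = relationDetIdeal A v :=
  le_antisymm (relationDetIdeal_cons_le hy) (relationDetIdeal_le_cons hy)

end Fin

theorem relationDetIdeal_append {n : ℕ} {v : Fin n → N}
    (hv : Submodule.span A (Set.range v) = ⊤) :
    ∀ {m : ℕ} (u : Fin m → N), relationDetIdeal A (Fin.append u v) = relationDetIdeal A v
  | 0, u => by
    rw [Fin.append_left_nil u v rfl]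
    exact relationDetIdeal_comp_equiv v (finCongr (Nat.zero_add n))
  | m + 1, u => by
    have hspan : Submodule.span A (Set.range (Fin.append (Fin.tail u) v)) = ⊤ :=
      top_unique <| hv ▸ Submodule.span_mono fun _ ⟨i, hi⟩ => ⟨Fin.natAdd m i, by simpa using hi⟩
    rw [← Fin.cons_self_tail u, Fin.append_cons]
    refine (relationDetIdeal_comp_equiv _ (finCongr (Nat.add_right_comm m 1 n))).trans ?_
    rw [relationDetIdeal_cons (hspan ▸ Submodule.mem_top), relationDetIdeal_append hv]

theorem relationDetIdeal_eq_of_span_eq_top {m n : ℕ} {v : Fin n → N} {w : Fin m → N}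
    (hv : Submodule.span A (Set.range v) = ⊤) (hw : Submodule.span A (Set.range w) = ⊤) :
    relationDetIdeal A w = relationDetIdeal A v := by
  have hflip : Fin.append v w ∘ finAddFlip = Fin.append w v := by
    ext i
    refine Fin.addCases (fun i => ?_) (fun i => ?_) i <;> simp
  rw [← relationDetIdeal_append hv w, ← hflip, relationDetIdeal_comp_equiv,
    relationDetIdeal_append hw]

theorem Submodule.span_range_comp_basis_eq_top {ι P : Type*} [AddCommGroup P] [Module A P]
    {g : P →ₗ[A] N} (hg : Function.Surjective g) (b : Module.Basis ι A P) :
    Submodule.span A (Set.range (g ∘ b)) = ⊤ := by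
  rw [Set.range_comp, Submodule.span_image, b.span_eq, Submodule.map_top,
    LinearMap.range_eq_top.mpr hg]

theorem fittingIdeal0_eq_relationDetIdeal {n : ℕ} {v : Fin n → N}
    (hv : Submodule.span A (Set.range v) = ⊤) :
    fittingIdeal0 A N = relationDetIdeal A v := by
  refine le_antisymm (Ideal.span_le.mpr ?_) (relationDetIdeal_le fun B hB => ?_)
  · rintro _ ⟨k, π, B, hπ, hB, rfl⟩
    rw [← relationDetIdeal_eq_of_span_eq_top hv
      (Submodule.span_range_comp_basis_eq_top hπ (Pi.basisFun A (Fin k)))]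
    refine det_mem_relationDetIdeal B fun j => ?_
    rw [← hB j, ← Finset.univ_sum_single fun i => B i j, map_sum]
    refine Finset.sum_congr rfl fun i _ => ?_
    rw [Function.comp_apply, Pi.basisFun_apply, ← map_smul, ← Pi.single_smul', smul_eq_mul,
      mul_one]
  · refine Ideal.subset_span ⟨n, Fintype.linearCombination A v, B, ?_, fun j => ?_, rfl⟩
    · rw [← LinearMap.range_eq_top, Fintype.range_linearCombination, hv]
    · simpa [Fintype.linearCombination_apply] using hB j

end RelationDetIdeal

section Localization

variable {R Rₛ M Mₛ : Type*} [CommRing R] [CommRing Rₛ] [Algebra R Rₛ]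
  [AddCommGroup M] [Module R M] [AddCommGroup Mₛ] [Module R Mₛ] [Module Rₛ Mₛ]
  [IsScalarTower R Rₛ Mₛ] {ι : Type*} [Fintype ι]

theorem map_relationDetIdeal_le [DecidableEq ι] (f : M →ₗ[R] Mₛ) (w : ι → M) :
    Ideal.map (algebraMap R Rₛ) (relationDetIdeal R w) ≤ relationDetIdeal Rₛ (f ∘ w) :=
  Ideal.map_le_iff_le_comap.mpr <| relationDetIdeal_le fun B hB => by
    rw [Ideal.mem_comap, RingHom.map_det]
    refine det_mem_relationDetIdeal _ fun j => ?_
    simpa [algebraMap_smul] using congrArg f (hB j)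

theorem exists_relation_of_relation_comp (S : Submonoid R) [IsLocalization S Rₛ]
    (f : M →ₗ[R] Mₛ) [IsLocalizedModule S f] {w : ι → M} {x : ι → Rₛ}
    (hx : ∑ i, x i • f (w i) = 0) :
    ∃ (y : ι → R) (s : S), ∑ i, y i • w i = 0 ∧
      ∀ i, algebraMap R Rₛ (y i) = algebraMap R Rₛ s * x i := by
  obtain ⟨t, ht⟩ := IsLocalization.exist_integer_multiples_of_finite S x
  choose z hz using ht
  have hfz : f (∑ i, z i • w i) = 0 := by
    simp only [map_sum, map_smul, ← algebraMap_smul Rₛ (z _) (f _), hz, smul_assoc,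
      ← Finset.smul_sum, hx, smul_zero]
  obtain ⟨s, hs⟩ := (IsLocalizedModule.eq_zero_iff S f).mp hfz
  refine ⟨fun i => s * z i, s * t, ?_, fun i => ?_⟩
  · simpa [mul_smul, Finset.smul_sum, Submonoid.smul_def] using hs
  · simp [hz, Algebra.smul_def, mul_assoc]

theorem relationDetIdeal_comp_le_map (S : Submonoid R) [IsLocalization S Rₛ]
    (f : M →ₗ[R] Mₛ) [IsLocalizedModule S f] [DecidableEq ι] (w : ι → M) :
    relationDetIdeal Rₛ (f ∘ w) ≤ Ideal.map (algebraMap R Rₛ) (relationDetIdeal R w) :=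
  relationDetIdeal_le fun B hB => by
    choose y s hy hys using fun j => exists_relation_of_relation_comp S f (hB j)
    let B₀ : Matrix ι ι R := of fun i j => y j i
    have hB₀ : B₀.map (algebraMap R Rₛ) = B * diagonal fun j => algebraMap R Rₛ (s j) := by
      ext i j
      simp [B₀, hys, mul_comm]
    have hdet : algebraMap R Rₛ B₀.det = B.det * algebraMap R Rₛ (∏ j, s j : S) := by
      rw [RingHom.map_det, RingHom.mapMatrix_apply, hB₀, det_mul, det_diagonal]
      simp
    rw [← Ideal.mul_unit_mem_iff_mem _ (IsLocalization.map_units Rₛ (∏ j, s j)), ← hdet]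
    exact Ideal.mem_map_of_mem _ (det_mem_relationDetIdeal B₀ hy)

theorem fittingIdeal0_eq_map_of_isLocalizedModule (S : Submonoid R) [IsLocalization S Rₛ]
    (f : M →ₗ[R] Mₛ) [IsLocalizedModule S f] [Module.Finite R M] :
    fittingIdeal0 Rₛ Mₛ = Ideal.map (algebraMap R Rₛ) (fittingIdeal0 R M) := by
  obtain ⟨n, w, hw⟩ := Module.Finite.exists_fin (R := R) (M := M)
  have hfw : Submodule.span Rₛ (Set.range (f ∘ w)) = ⊤ := by
    rw [Set.range_comp]
    exact span_eq_top_of_isLocalizedModule Rₛ S f hw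
  rw [fittingIdeal0_eq_relationDetIdeal hw, fittingIdeal0_eq_relationDetIdeal hfw]
  exact le_antisymm (relationDetIdeal_comp_le_map S f w) (map_relationDetIdeal_le f w)

end Localization

section SquarePresentation

variable {A P₀ P₁ N : Type*} [CommRing A] [AddCommGroup P₀] [Module A P₀]
  [AddCommGroup P₁] [Module A P₁] [AddCommGroup N] [Module A N]
  {ρ : P₁ →ₗ[A] P₀} {g : P₀ →ₗ[A] N}

theorem sum_smul_eq_zero_iff_exists_toMatrix_mulVec {ι κ : Type*} [Fintype ι] [DecidableEq ι]
    [Fintype κ] [DecidableEq κ] (hex : Function.Exact ρ g)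
    (b₁ : Module.Basis κ A P₁) (b₀ : Module.Basis ι A P₀) (x : ι → A) :
    ∑ i, x i • g (b₀ i) = 0 ↔ ∃ c, LinearMap.toMatrix b₁ b₀ ρ *ᵥ c = x := by
  simp only [← map_smul, ← map_sum, ← b₀.equivFun_symm_apply, hex _]
  constructor
  · rintro ⟨y, hy⟩
    refine ⟨b₁.repr y, ?_⟩
    rw [LinearMap.toMatrix_mulVec_repr, hy, ← b₀.equivFun_apply, LinearEquiv.apply_symm_apply]
  · rintro ⟨c, rfl⟩
    refine ⟨b₁.equivFun.symm c, b₀.equivFun.injective ?_⟩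
    rw [LinearEquiv.apply_symm_apply, b₀.equivFun_apply,
      ← LinearMap.toMatrix_mulVec_repr b₁ b₀ ρ, ← b₁.equivFun_apply, LinearEquiv.apply_symm_apply]

theorem fittingIdeal0_eq_span_det {n : ℕ} (hg : Function.Surjective g)
    (hex : Function.Exact ρ g) (b₁ : Module.Basis (Fin n) A P₁) (b₀ : Module.Basis (Fin n) A P₀) :
    fittingIdeal0 A N = Ideal.span {(LinearMap.toMatrix b₁ b₀ ρ).det} := by
  have hrel := sum_smul_eq_zero_iff_exists_toMatrix_mulVec hex b₁ b₀
  rw [fittingIdeal0_eq_relationDetIdeal (Submodule.span_range_comp_basis_eq_top hg b₀)]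
  refine le_antisymm (relationDetIdeal_le fun B hB => ?_)
    ((Ideal.span_singleton_le_iff_mem _).mpr (det_mem_relationDetIdeal _ fun j => ?_))
  · choose c hc using fun j => (hrel (B · j)).mp (hB j)
    have hB : B = LinearMap.toMatrix b₁ b₀ ρ * of fun i j => c j i := by
      ext i j
      exact (congrFun (hc j) i).symm
    rw [hB, det_mul]
    exact Ideal.mul_mem_right _ _ (Ideal.mem_span_singleton_self _)
  · exact (hrel _).mpr ⟨Pi.single j 1, mulVec_single_one _ j⟩

end SquarePresentation

theorem finrank_localizedModule_eq_of_forall_isMaximal {R P Q : Type*} [CommRing R]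
    [AddCommGroup P] [Module R P] [Module.Finite R P] [Module.Flat R P]
    [AddCommGroup Q] [Module R Q] [Module.Finite R Q] [Module.Flat R Q]
    (h : ∀ (𝔪 : Ideal R) [𝔪.IsMaximal],
      Module.finrank (Localization 𝔪.primeCompl) (LocalizedModule 𝔪.primeCompl P) =
        Module.finrank (Localization 𝔪.primeCompl) (LocalizedModule 𝔪.primeCompl Q))
    (𝔭 : Ideal R) [h𝔭 : 𝔭.IsPrime] :
    Module.finrank (Localization 𝔭.primeCompl) (LocalizedModule 𝔭.primeCompl P) =
      Module.finrank (Localization 𝔭.primeCompl) (LocalizedModule 𝔭.primeCompl Q) := by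
  obtain ⟨𝔪, h𝔪, h𝔭𝔪⟩ := 𝔭.exists_le_maximal h𝔭.ne_top
  exact (Module.rankAtStalk_eq_of_le_of_finite_of_flat' P h𝔭𝔪).trans
    ((h 𝔪).trans (Module.rankAtStalk_eq_of_le_of_finite_of_flat' Q h𝔭𝔪).symm)

/-- If `M` has a presentation `P₁ →^ρ P₀ → M → 0` with `P₀, P₁` finitely
generated projective of equal local ranks at every maximal ideal, then the 0-th Fitting
ideal of `M` is locally principal, generated at each prime `𝔪` by the determinant of the
localization `ρ_𝔪` (computed in bases of the localized — hence free — modules). -/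
theorem fittingIdeal_locally_principal_of_locally_quadratic_presentation
    (R : Type*) [CommRing R]
    (M P₀ P₁ : Type*) [AddCommGroup M] [Module R M]
    [AddCommGroup P₀] [Module R P₀] [AddCommGroup P₁] [Module R P₁]
    [Module.Finite R P₀] [Module.Projective R P₀]
    [Module.Finite R P₁] [Module.Projective R P₁]
    (ρ : P₁ →ₗ[R] P₀) (g : P₀ →ₗ[R] M)
    (hg : Function.Surjective g) (hexact : Function.Exact ρ g)
    (hrank : ∀ (𝔪 : Ideal R) [𝔪.IsMaximal],
      Module.finrank (Localization 𝔪.primeCompl) (LocalizedModule 𝔪.primeCompl P₀) =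
        Module.finrank (Localization 𝔪.primeCompl) (LocalizedModule 𝔪.primeCompl P₁)) :
    ∀ (𝔪 : Ideal R) [𝔪.IsPrime],
      ∃ (n : ℕ)
        (b₁ : Module.Basis (Fin n) (Localization 𝔪.primeCompl) (LocalizedModule 𝔪.primeCompl P₁))
        (b₀ : Module.Basis (Fin n) (Localization 𝔪.primeCompl) (LocalizedModule 𝔪.primeCompl P₀)),
        Ideal.map (algebraMap R (Localization 𝔪.primeCompl)) (fittingIdeal0 R M) =
          Ideal.span
            {Matrix.det (LinearMap.toMatrix b₁ b₀ (LocalizedModule.map 𝔪.primeCompl ρ))} := by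
  intro 𝔪 _
  have : Module.Finite R M := .of_surjective g hg
  have : Module.Free (Localization 𝔪.primeCompl) (LocalizedModule 𝔪.primeCompl P₀) :=
    Module.free_of_flat_of_isLocalRing
  have : Module.Free (Localization 𝔪.primeCompl) (LocalizedModule 𝔪.primeCompl P₁) :=
    Module.free_of_flat_of_isLocalRing
  have hrk := finrank_localizedModule_eq_of_forall_isMaximal hrank 𝔪
  refine ⟨_, (Module.finBasis _ _).reindex (finCongr hrk.symm), Module.finBasis _ _, ?_⟩
  rw [← fittingIdeal0_eq_map_of_isLocalizedModule 𝔪.primeCompl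
    (LocalizedModule.mkLinearMap 𝔪.primeCompl M)]
  exact fittingIdeal0_eq_span_det (LocalizedModule.map_surjective _ g hg)
    (IsLocalizedModule.map_exact _ (LocalizedModule.mkLinearMap 𝔪.primeCompl P₁)
      (LocalizedModule.mkLinearMap 𝔪.primeCompl P₀) (LocalizedModule.mkLinearMap 𝔪.primeCompl M)
      ρ g hexact) _ _
end

section
/- Let M be a locally quadratically presented module over a commutative ring R, with presentation P₁ →^ρ P₀ → M → 0 (P₀, P₁ finitely generated projective of equal local ranks). Define the transpose M^tr as the cokernel of the dual map ρ*: P₀* → P₁*, where (-)* = Hom_R(-, R). Then Fitt_R(M^tr) = Fitt_R(M). -/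
section FittingIdealOf

variable {R : Type*} [CommRing R] {M : Type*} [AddCommGroup M] [Module R M]

def fittingIdealOf {n : ℕ} (π : (Fin n → R) →ₗ[R] M) : Ideal R :=
  Ideal.span { r : R | ∃ A : Matrix (Fin n) (Fin n) R,
    (∀ j, π (fun i => A i j) = 0) ∧ r = A.det }

variable {n : ℕ} {π : (Fin n → R) →ₗ[R] M}

theorem det_mem_fittingIdealOf {A : Matrix (Fin n) (Fin n) R}
    (hA : ∀ j, π (fun i => A i j) = 0) : A.det ∈ fittingIdealOf π :=
  Ideal.subset_span ⟨A, hA, rfl⟩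

theorem fittingIdealOf_le {I : Ideal R}
    (h : ∀ A : Matrix (Fin n) (Fin n) R, (∀ j, π (fun i => A i j) = 0) → A.det ∈ I) :
    fittingIdealOf π ≤ I := by
  rw [fittingIdealOf, Ideal.span_le]
  rintro _ ⟨A, hA, rfl⟩
  exact h A hA

theorem fittingIdealOf_comp_le_of_isUnit {f : Module.End R (Fin n → R)} (hf : IsUnit f) :
    fittingIdealOf (π ∘ₗ f) ≤ fittingIdealOf π := by
  refine fittingIdealOf_le fun A hA => ?_
  set U := LinearMap.toMatrix' f
  have hU : IsUnit U.det := by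
    rwa [LinearMap.det_toMatrix', ← LinearMap.isUnit_iff_isUnit_det]
  have hUA : ∀ j, π (fun i => (U * A) i j) = 0 := fun j => by
    have hcol : (fun i => (U * A) i j) = f (fun i => A i j) := by
      rw [← LinearMap.toMatrix'_mulVec]
      ext i
      simp [U, Matrix.mul_apply, Matrix.mulVec, dotProduct]
    rw [hcol]
    exact hA j
  rw [← Ideal.unit_mul_mem_iff_mem _ hU, ← Matrix.det_mul]
  exact det_mem_fittingIdealOf hUA

theorem fittingIdealOf_comp_of_isUnit {f : Module.End R (Fin n → R)} (hf : IsUnit f) :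
    fittingIdealOf (π ∘ₗ f) = fittingIdealOf π := by
  refine le_antisymm (fittingIdealOf_comp_le_of_isUnit hf) ?_
  have h := fittingIdealOf_comp_le_of_isUnit (π := π ∘ₗ f) (hf.unit⁻¹).isUnit
  rwa [LinearMap.comp_assoc, ← Module.End.mul_eq_comp, IsUnit.mul_val_inv, Module.End.one_eq_id,
    LinearMap.comp_id] at h

theorem fittingIdealOf_comp_funLeft_equiv {m : ℕ} (e : Fin n ≃ Fin m) :
    fittingIdealOf (π ∘ₗ LinearMap.funLeft R R e) = fittingIdealOf π := by
  apply le_antisymm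
  · refine fittingIdealOf_le fun A hA => ?_
    rw [← Matrix.det_submatrix_equiv_self e A]
    refine det_mem_fittingIdealOf fun j => ?_
    simpa [Matrix.submatrix_apply, LinearMap.funLeft, Function.comp_def] using hA (e j)
  · refine fittingIdealOf_le fun A hA => ?_
    rw [← Matrix.det_submatrix_equiv_self e.symm A]
    refine det_mem_fittingIdealOf fun j => ?_
    simpa [Matrix.submatrix_apply, LinearMap.funLeft, Function.comp_def] using hA (e.symm j)

theorem fittingIdealOf_comp_funLeft_castSucc_le :
    fittingIdealOf (π ∘ₗ LinearMap.funLeft R R (Fin.castSucc : Fin n → Fin (n + 1))) ≤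
      fittingIdealOf π := by
  refine fittingIdealOf_le fun A hA => ?_
  rw [Matrix.det_succ_row A (Fin.last n)]
  refine Ideal.sum_mem _ fun j _ => Ideal.mul_mem_left _ _ (det_mem_fittingIdealOf fun l => ?_)
  simpa [Fin.succAbove_last, LinearMap.funLeft, Function.comp_def] using hA (j.succAbove l)

theorem le_fittingIdealOf_comp_funLeft_castAdd (m : ℕ) :
    fittingIdealOf π ≤ fittingIdealOf (π ∘ₗ LinearMap.funLeft R R (Fin.castAdd m)) := by
  refine fittingIdealOf_le fun A hA => ?_
  set B : Matrix (Fin (n + m)) (Fin (n + m)) R :=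
    Matrix.reindex finSumFinEquiv finSumFinEquiv (Matrix.fromBlocks A 0 0 1)
  have hB : B.det = A.det := by simp [B]
  rw [← hB]
  refine det_mem_fittingIdealOf fun j => ?_
  induction j using Fin.addCases with
  | left j => simpa [B, LinearMap.funLeft, Function.comp_def] using hA j
  | right j =>
    have hzero : LinearMap.funLeft R R (Fin.castAdd m) (fun i => B i (Fin.natAdd n j)) = 0 := by
      ext i
      simp [B, LinearMap.funLeft]
    rw [LinearMap.comp_apply, hzero, map_zero]

theorem fittingIdealOf_comp_funLeft_castAdd (m : ℕ) :
    fittingIdealOf (π ∘ₗ LinearMap.funLeft R R (Fin.castAdd m)) = fittingIdealOf π := by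
  refine le_antisymm ?_ (le_fittingIdealOf_comp_funLeft_castAdd m)
  induction m with
  | zero => exact le_of_eq (congrArg fittingIdealOf (by ext; simp [LinearMap.funLeft]))
  | succ m ih =>
    have hsplit : π ∘ₗ LinearMap.funLeft R R (Fin.castAdd (m + 1)) =
        (π ∘ₗ LinearMap.funLeft R R (Fin.castAdd m)) ∘ₗ
          LinearMap.funLeft R R (Fin.castSucc : Fin (n + m) → Fin (n + m + 1)) :=
      rfl
    rw [hsplit]
    exact fittingIdealOf_comp_funLeft_castSucc_le.trans ih

theorem fittingIdealOf_add_of_surjective (hπ : Function.Surjective π) {m : ℕ}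
    (π' : (Fin m → R) →ₗ[R] M) :
    fittingIdealOf (π ∘ₗ LinearMap.funLeft R R (Fin.castAdd m) +
      π' ∘ₗ LinearMap.funLeft R R (Fin.natAdd n)) = fittingIdealOf π := by
  obtain ⟨φ, hφ⟩ := Module.projective_lifting_property π π' hπ
  -- `1 + N` is the automorphism `(x, y) ↦ (x + φ y, y)`; it turns `(π, 0)` into `(π, π')`.
  let N : Module.End R (Fin (n + m) → R) := LinearMap.pi fun k =>
    Fin.addCases (motive := fun _ => (Fin (n + m) → R) →ₗ[R] R)
      (fun i => LinearMap.proj i ∘ₗ φ ∘ₗ LinearMap.funLeft R R (Fin.natAdd n)) (fun _ => 0) k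
  have hN : N * N = 0 := by
    ext v k
    induction k using Fin.addCases <;>
      simp [N, LinearMap.funLeft, Function.comp_def, ← Pi.zero_def]
  have hunit : IsUnit (1 + N) := IsNilpotent.isUnit_one_add ⟨2, by rw [pow_two, hN]⟩
  have hcomp : (π ∘ₗ LinearMap.funLeft R R (Fin.castAdd m)) ∘ₗ (1 + N) =
      π ∘ₗ LinearMap.funLeft R R (Fin.castAdd m) + π' ∘ₗ LinearMap.funLeft R R (Fin.natAdd n) := by
    refine LinearMap.ext fun v => ?_
    simp [N, LinearMap.funLeft, Function.comp_def, ← hφ, ← map_add, ← Pi.add_def]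
  rw [← hcomp, fittingIdealOf_comp_of_isUnit hunit, fittingIdealOf_comp_funLeft_castAdd]

theorem fittingIdealOf_eq_of_surjective (hπ : Function.Surjective π) {m : ℕ}
    {π' : (Fin m → R) →ₗ[R] M} (hπ' : Function.Surjective π') :
    fittingIdealOf π = fittingIdealOf π' := by
  have hflip : π' ∘ₗ LinearMap.funLeft R R (Fin.castAdd n) +
      π ∘ₗ LinearMap.funLeft R R (Fin.natAdd m) =
      (π ∘ₗ LinearMap.funLeft R R (Fin.castAdd m) + π' ∘ₗ LinearMap.funLeft R R (Fin.natAdd n)) ∘ₗ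
        LinearMap.funLeft R R finAddFlip := by
    ext v
    simp [LinearMap.funLeft, Function.comp_def, add_comm]
  rw [← fittingIdealOf_add_of_surjective hπ π', ← fittingIdealOf_add_of_surjective hπ' π, hflip,
    fittingIdealOf_comp_funLeft_equiv]

theorem fittingIdeal0_eq_fittingIdealOf (hπ : Function.Surjective π) :
    fittingIdeal0 R M = fittingIdealOf π := by
  refine le_antisymm ?_ (fittingIdealOf_le fun A hA => Ideal.subset_span ⟨n, π, A, hπ, hA, rfl⟩)
  rw [fittingIdeal0, Ideal.span_le]
  rintro _ ⟨k, π', A, hπ', hA, rfl⟩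
  rw [fittingIdealOf_eq_of_surjective hπ hπ']
  exact det_mem_fittingIdealOf hA

theorem fittingIdeal0_eq_span_det_s2 {N₁ N₀ : Type*} [AddCommGroup N₁] [Module R N₁]
    [AddCommGroup N₀] [Module R N₀] {r : ℕ} (b₁ : Module.Basis (Fin r) R N₁)
    (b₀ : Module.Basis (Fin r) R N₀) (φ : N₁ →ₗ[R] N₀) (q : N₀ →ₗ[R] M)
    (hq : Function.Surjective q) (hexact : Function.Exact φ q) :
    fittingIdeal0 R M = Ideal.span {(LinearMap.toMatrix b₁ b₀ φ).det} := by
  set S := LinearMap.toMatrix b₁ b₀ φ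
  rw [fittingIdeal0_eq_fittingIdealOf (π := q ∘ₗ b₀.equivFun.symm.toLinearMap)
    (hq.comp b₀.equivFun.symm.surjective)]
  apply le_antisymm
  · refine fittingIdealOf_le fun A hA => ?_
    have hlift : ∀ j, ∃ y, φ y = b₀.equivFun.symm (fun i => A i j) := fun j => (hexact _).mp (hA j)
    choose y hy using hlift
    have hSB : S * Matrix.of (fun k j => b₁.repr (y j) k) = A := by
      ext i j
      have h := congrFun (LinearMap.toMatrix_mulVec_repr b₁ b₀ φ (y j)) i
      rw [hy j] at h
      have hA' : b₀.repr (b₀.equivFun.symm fun i => A i j) i = A i j :=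
        congrFun (b₀.equivFun.apply_symm_apply _) i
      rw [hA'] at h
      simpa [S, Matrix.mul_apply, Matrix.mulVec, dotProduct] using h
    rw [← hSB, Matrix.det_mul]
    exact Ideal.mul_mem_right _ _ (Ideal.mem_span_singleton_self _)
  · rw [Ideal.span_le, Set.singleton_subset_iff]
    refine det_mem_fittingIdealOf fun j => ?_
    have hcol : (fun i => S i j) = b₀.equivFun (φ (b₁ j)) := by
      ext i
      simp [S, LinearMap.toMatrix_apply]
    simpa [hcol] using hexact.apply_apply_eq_zero (b₁ j)

end FittingIdealOf

theorem IsLocalizedModule.exists_smul_eq_of_map_eq_zero {R : Type*} [CommSemiring R]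
    (S : Submonoid R) {M M' N N' : Type*} [AddCommMonoid M] [AddCommMonoid M'] [AddCommMonoid N]
    [AddCommMonoid N'] [Module R M] [Module R M'] [Module R N] [Module R N']
    (f : M →ₗ[R] M') (g : N →ₗ[R] N') [IsLocalizedModule S f] [IsLocalizedModule S g]
    (φ : M →ₗ[R] N) {y : M'} (hy : IsLocalizedModule.map S f g φ y = 0) :
    ∃ (x : M) (s : S), f x = s • y ∧ φ x = 0 := by
  obtain ⟨⟨x, s⟩, hx⟩ := IsLocalizedModule.surj S f y
  have hφx : g (φ x) = 0 := by
    rw [← IsLocalizedModule.map_apply S f g φ, ← hx, LinearMap.map_smul_of_tower, hy, smul_zero]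
  obtain ⟨t, ht⟩ := (IsLocalizedModule.eq_zero_iff S g).mp hφx
  exact ⟨t • x, t * s, by rw [LinearMap.map_smul_of_tower, ← hx, mul_smul],
    by rw [LinearMap.map_smul_of_tower, ht]⟩

section Localization

variable {R : Type*} [CommRing R] (S : Submonoid R) {M : Type*} [AddCommGroup M] [Module R M]

theorem map_fittingIdeal0_localization [Module.Finite R M] :
    Ideal.map (algebraMap R (Localization S)) (fittingIdeal0 R M) =
      fittingIdeal0 (Localization S) (LocalizedModule S M) := by
  obtain ⟨k, π, hπ⟩ := Module.Finite.exists_fin' R M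
  let f : (Fin k → R) →ₗ[R] (Fin k → Localization S) :=
    LinearMap.pi fun i => Algebra.linearMap R (Localization S) ∘ₗ LinearMap.proj i
  let g := LocalizedModule.mkLinearMap S M
  let πₛ := IsLocalizedModule.mapExtendScalars S f g (Localization S) π
  have hπₛ : Function.Surjective πₛ := IsLocalizedModule.map_surjective S f g π hπ
  have hπₛf : ∀ v, πₛ (f v) = g (π v) := IsLocalizedModule.map_apply S f g π
  rw [fittingIdeal0_eq_fittingIdealOf hπ, fittingIdeal0_eq_fittingIdealOf hπₛ]
  apply le_antisymm
  · rw [Ideal.map_le_iff_le_comap]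
    refine fittingIdealOf_le fun A hA => ?_
    rw [Ideal.mem_comap, RingHom.map_det]
    refine det_mem_fittingIdealOf fun j => ?_
    exact (hπₛf fun i => A i j).trans (by rw [hA j, map_zero])
  · -- Clearing the denominators of `A` column by column multiplies `det A` by a unit.
    refine fittingIdealOf_le fun A hA => ?_
    choose v s hvs hv using fun j =>
      IsLocalizedModule.exists_smul_eq_of_map_eq_zero S f g π (y := fun i => A i j) (hA j)
    let W : Matrix (Fin k) (Fin k) R := Matrix.of fun i j => v j i
    have hW : (algebraMap R (Localization S)).mapMatrix W =
        A * Matrix.diagonal fun j => algebraMap R (Localization S) (s j) := by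
      ext i j
      simpa [W, f, Submonoid.smul_def, Algebra.smul_def, mul_comm] using congrFun (hvs j) i
    have hunit : IsUnit (∏ j, algebraMap R (Localization S) (s j)) :=
      IsUnit.prod_univ_iff.mpr fun j => IsLocalization.map_units _ (s j)
    rw [← Ideal.mul_unit_mem_iff_mem _ hunit, ← Matrix.det_diagonal, ← Matrix.det_mul, ← hW,
      ← RingHom.map_det]
    exact Ideal.mem_map_of_mem _ (det_mem_fittingIdealOf hv)

end Localization

section DualLocalization

variable {R : Type*} [CommRing R] (S : Submonoid R)

noncomputable def dualLocalization (P : Type*) [AddCommGroup P] [Module R P] :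
    Module.Dual R P →ₗ[R] Module.Dual (Localization S) (LocalizedModule S P) :=
  IsLocalizedModule.mapExtendScalars S (LocalizedModule.mkLinearMap S P)
    (Algebra.linearMap R (Localization S)) (Localization S)

variable {P₀ P₁ : Type*} [AddCommGroup P₀] [Module R P₀] [AddCommGroup P₁] [Module R P₁]

theorem dualLocalization_apply_mk (h : Module.Dual R P₀) (x : P₀) :
    dualLocalization S P₀ h (LocalizedModule.mk x 1) =
      algebraMap R (Localization S) (h x) :=
  IsLocalizedModule.map_apply S _ _ h x

instance isLocalizedModule_dualLocalization [Module.Finite R P₀] [Module.Projective R P₀] :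
    IsLocalizedModule S (dualLocalization S P₀) :=
  have := Module.finitePresentation_of_projective R P₀
  Module.FinitePresentation.isLocalizedModule_mapExtendScalars S _ _ _

theorem IsLocalizedModule.map_dualLocalization_dualMap [Module.Finite R P₀]
    [Module.Projective R P₀] [Module.Finite R P₁] [Module.Projective R P₁] (ρ : P₁ →ₗ[R] P₀) :
    IsLocalizedModule.map S (dualLocalization S P₀) (dualLocalization S P₁) ρ.dualMap =
      ((LocalizedModule.map S ρ).dualMap).restrictScalars R := by
  refine IsLocalizedModule.ext S (dualLocalization S P₀)
    (IsLocalizedModule.map_units (dualLocalization S P₁)) (LinearMap.ext fun h => ?_)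
  refine LinearMap.restrictScalars_injective R
    (IsLocalizedModule.linearMap_ext S (LocalizedModule.mkLinearMap S P₁)
      (Algebra.linearMap R (Localization S)) (LinearMap.ext fun x => ?_))
  simp [IsLocalizedModule.map_apply, dualLocalization_apply_mk]

theorem exists_surjective_exact_localizedModule_dualMap [Module.Finite R P₀]
    [Module.Projective R P₀] [Module.Finite R P₁] [Module.Projective R P₁] (ρ : P₁ →ₗ[R] P₀) :
    ∃ q : Module.Dual (Localization S) (LocalizedModule S P₁) →ₗ[Localization S]
        LocalizedModule S (Module.Dual R P₁ ⧸ LinearMap.range ρ.dualMap),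
      Function.Surjective q ∧ Function.Exact (LocalizedModule.map S ρ).dualMap q := by
  let T := Module.Dual R P₁ ⧸ LinearMap.range ρ.dualMap
  refine ⟨IsLocalizedModule.mapExtendScalars S (dualLocalization S P₁)
    (LocalizedModule.mkLinearMap S T) (Localization S) (LinearMap.range ρ.dualMap).mkQ,
    IsLocalizedModule.map_surjective S _ _ _ (Submodule.mkQ_surjective _), ?_⟩
  have h := IsLocalizedModule.map_exact S (dualLocalization S P₀) (dualLocalization S P₁)
    (LocalizedModule.mkLinearMap S T) ρ.dualMap _ (LinearMap.exact_map_mkQ_range ρ.dualMap)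
  rwa [IsLocalizedModule.map_dualLocalization_dualMap] at h

end DualLocalization

theorem fittingIdeal0_eq_of_exact_dualMap {L : Type*} [CommRing L] [Nontrivial L]
    {N₀ N₁ C C' : Type*} [AddCommGroup N₀] [Module L N₀] [AddCommGroup N₁] [Module L N₁]
    [AddCommGroup C] [Module L C] [AddCommGroup C'] [Module L C']
    [Module.Free L N₀] [Module.Finite L N₀] [Module.Free L N₁] [Module.Finite L N₁]
    (hrank : Module.finrank L N₀ = Module.finrank L N₁) (φ : N₁ →ₗ[L] N₀)
    {q : N₀ →ₗ[L] C} (hq : Function.Surjective q) (hexact : Function.Exact φ q)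
    {q' : Module.Dual L N₁ →ₗ[L] C'} (hq' : Function.Surjective q')
    (hexact' : Function.Exact φ.dualMap q') :
    fittingIdeal0 L C' = fittingIdeal0 L C := by
  let b₀ := Module.finBasis L N₀
  let b₁ := Module.finBasisOfFinrankEq L N₁ hrank.symm
  rw [fittingIdeal0_eq_span_det_s2 b₁ b₀ φ q hq hexact,
    fittingIdeal0_eq_span_det_s2 b₀.dualBasis b₁.dualBasis φ.dualMap q' hq' hexact',
    LinearMap.dualMap_def, LinearMap.toMatrix_transpose, Matrix.det_transpose]

instance Module.free_localizedModule_primeCompl {R : Type*} [CommRing R] (𝔭 : Ideal R) [𝔭.IsPrime]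
    (P : Type*) [AddCommGroup P] [Module R P] [Module.Finite R P] [Module.Projective R P] :
    Module.Free (Localization 𝔭.primeCompl) (LocalizedModule 𝔭.primeCompl P) :=
  Module.free_of_flat_of_isLocalRing

/-- If `M` has a locally quadratic presentation `P₁ →^ρ P₀ → M → 0`
(`P₀, P₁` finitely generated projective of equal local ranks at every prime), then the
transpose `M^tr := coker(ρ* : P₀* → P₁*)` satisfies `Fitt_R(M^tr) = Fitt_R(M)`. -/
theorem fittingIdeal_transpose_eq
    (R : Type*) [CommRing R]
    (M P₀ P₁ : Type*) [AddCommGroup M] [Module R M]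
    [AddCommGroup P₀] [Module R P₀] [AddCommGroup P₁] [Module R P₁]
    [Module.Finite R P₀] [Module.Projective R P₀]
    [Module.Finite R P₁] [Module.Projective R P₁]
    (ρ : P₁ →ₗ[R] P₀) (g : P₀ →ₗ[R] M)
    (hg : Function.Surjective g) (hexact : Function.Exact ρ g)
    (hrank : ∀ (𝔭 : Ideal R) [𝔭.IsPrime],
      Module.finrank (Localization 𝔭.primeCompl) (LocalizedModule 𝔭.primeCompl P₀) =
        Module.finrank (Localization 𝔭.primeCompl) (LocalizedModule 𝔭.primeCompl P₁)) :
    fittingIdeal0 R (Module.Dual R P₁ ⧸ LinearMap.range (ρ.dualMap)) = fittingIdeal0 R M := by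
  have : Module.Finite R M := .of_surjective g hg
  refine Ideal.eq_of_localization_maximal fun 𝔭 _ => ?_
  rw [map_fittingIdeal0_localization, map_fittingIdeal0_localization]
  obtain ⟨q, hq, hexact'⟩ := exists_surjective_exact_localizedModule_dualMap 𝔭.primeCompl ρ
  exact fittingIdeal0_eq_of_exact_dualMap (hrank 𝔭) _ (LocalizedModule.map_surjective _ g hg)
    (LocalizedModule.map_exact _ ρ g hexact) hq hexact'
end

section
/- Let G be a finite abelian group, R a quotient ring of ℤ[G] which is free as a ℤ-module, and P →^ι F → X → 0 an exact sequence of ℤ[G]-modules with F free of rank n and P projective of rank n. If Fitt_R(X ⊗_{ℤ[G]} R) = xR with x a non-zero-divisor of R, then the induced map ι_R: P ⊗_{ℤ[G]} R → F ⊗_{ℤ[G]} R is injective; in particular X ⊗_{ℤ[G]} R has projective dimension 1 over R. -/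
open scoped TensorProduct

/-!
The Fitting ideal annihilates `X_R`, so the non-zero-divisor `x` kills `X_R`; hence `X_R` vanishes
over the total ring of fractions `Q` of `R` and `ι_Q : P_Q → F_Q` is surjective. Source and target
are finite projective of the same constant rank, so at every maximal ideal `ι_Q` is a surjective
endomorphism of a finite free module, hence injective. A projective `R`-module embeds into its
localization at the non-zero-divisors, so `ι_R` is injective too, and `0 → P_R → F_R → X_R → 0`
is a projective resolution.
-/

open Module

section

variable {R M : Type*} [CommRing R] [AddCommGroup M] [Module R M]

theorem fittingIdeal0_le_annihilator : fittingIdeal0 R M ≤ Module.annihilator R M := by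
  classical
  rw [fittingIdeal0, Ideal.span_le]
  rintro _ ⟨n, π, A, hπ, hcols, rfl⟩
  rw [SetLike.mem_coe, Module.mem_annihilator]
  have hπA : π ∘ₗ Matrix.toLin' A = 0 :=
    (Pi.basisFun R (Fin n)).ext fun j => by
      simp only [LinearMap.comp_apply, Matrix.toLin'_apply, Pi.basisFun_apply,
        Matrix.mulVec_single_one, LinearMap.zero_apply]
      exact hcols j
  intro m
  obtain ⟨v, rfl⟩ := hπ m
  calc A.det • π v = (π ∘ₗ Matrix.toLin' A) (A.adjugate.mulVec v) := by
        rw [LinearMap.comp_apply, Matrix.toLin'_apply, Matrix.mulVec_mulVec, Matrix.mul_adjugate,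
          Matrix.smul_mulVec, Matrix.one_mulVec, map_smul]
    _ = 0 := by rw [hπA, LinearMap.zero_apply]

theorem subsingleton_tensor_of_mem_annihilator {A : Type*} [CommRing A] [Algebra R A] {x : R}
    (hx : IsUnit (algebraMap R A x)) (hxM : x ∈ Module.annihilator R M) :
    Subsingleton (A ⊗[R] M) := by
  have hxz : ∀ z : A ⊗[R] M, x • z = 0 := fun z => by
    induction z using TensorProduct.induction_on with
    | zero => exact smul_zero x
    | tmul a m => rw [TensorProduct.smul_tmul', TensorProduct.smul_tmul,
        Module.mem_annihilator.mp hxM m, TensorProduct.tmul_zero]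
    | add a b ha hb => rw [smul_add, ha, hb, add_zero]
  exact subsingleton_of_forall_eq 0 fun z =>
    hx.smul_left_cancel.mp (by rw [algebraMap_smul, hxz, smul_zero])

theorem Function.Exact.baseChange {N L : Type*} [AddCommGroup N] [Module R N] [AddCommGroup L]
    [Module R L] (A : Type*) [CommRing A] [Algebra R A] {f : M →ₗ[R] N} {g : N →ₗ[R] L}
    (hfg : Function.Exact f g) (hg : Function.Surjective g) :
    Function.Exact (f.baseChange A) (g.baseChange A) := by
  simpa only [LinearMap.baseChange_eq_ltensor] using lTensor_exact A hfg hg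

theorem LinearMap.injective_of_injective_baseChange_of_le_nonZeroDivisors [Module.Flat R M]
    {N : Type*} [AddCommGroup N] [Module R N] {S : Submonoid R} (hS : S ≤ nonZeroDivisors R)
    (A : Type*) [CommRing A] [Algebra R A] [IsLocalization S A] (f : M →ₗ[R] N)
    (hf : Function.Injective (f.baseChange A)) : Function.Injective f := by
  have hM : Function.Injective (TensorProduct.mk R A M 1) :=
    (IsLocalizedModule.injective_iff_isRegular S _).mpr
      fun c => Module.Flat.isSMulRegular_of_nonZeroDivisors (hS c.2)
  have hcomm : ⇑(TensorProduct.mk R A N 1) ∘ f = f.baseChange A ∘ TensorProduct.mk R A M 1 := by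
    ext m
    simp
  exact Function.Injective.of_comp (f := TensorProduct.mk R A N 1)
    (by rw [hcomm]; exact hf.comp hM)

theorem LinearMap.injective_baseChange_of_rankAtStalk_eq {N : Type*} [AddCommGroup N]
    [Module R N] [Module.Finite R M] [Module.Flat R M] [Module.Finite R N] [Module.Flat R N]
    {A : Type*} [CommRing A] [Algebra R A] {f : M →ₗ[R] N}
    (hrank : rankAtStalk (R := R) M = rankAtStalk N) (hf : Function.Surjective (f.baseChange A)) :
    Function.Injective (f.baseChange A) :=
  (bijective_of_surjective_of_rankAtStalk_eq hf fun _ _ => by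
    rw [rankAtStalk_baseChange, rankAtStalk_baseChange, hrank]).1

theorem exists_surjective_pi_with_projective_ker {P F : Type*} [AddCommGroup P] [Module R P]
    [Module.Projective R P] [AddCommGroup F] [Module R F] {n : ℕ} (bF : Basis (Fin n) R F)
    {ι : P →ₗ[R] F} {π : F →ₗ[R] M} (hι : Function.Injective ι) (hπ : Function.Surjective π)
    (hexact : Function.Exact ι π) :
    ∃ (m : ℕ) (s : (Fin m → R) →ₗ[R] M),
      Function.Surjective s ∧ Module.Projective R (LinearMap.ker s) := by
  let e := bF.equivFun
  have hker : LinearMap.ker (π ∘ₗ e.symm.toLinearMap) =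
      (LinearMap.ker π).map (e : F →ₗ[R] Fin n → R) := by
    rw [LinearMap.ker_comp, Submodule.comap_equiv_eq_map_symm, e.symm_symm]
  refine ⟨n, π ∘ₗ e.symm.toLinearMap, hπ.comp e.symm.surjective, ?_⟩
  exact .of_equiv <| (LinearEquiv.ofInjective ι hι).trans <|
    (LinearEquiv.ofEq _ _ hexact.linearMap_ker_eq.symm).trans <|
    (e.submoduleMap _).trans (LinearEquiv.ofEq _ _ hker.symm)

end

theorem baseChange_injective_of_fitting_principal_general
    (G : Type*) [CommGroup G]
    (R : Type*) [CommRing R] [Algebra (MonoidAlgebra ℤ G) R]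
    (P F X : Type*)
    [AddCommGroup P] [Module (MonoidAlgebra ℤ G) P]
    [AddCommGroup F] [Module (MonoidAlgebra ℤ G) F]
    [AddCommGroup X] [Module (MonoidAlgebra ℤ G) X]
    [Module.Finite (MonoidAlgebra ℤ G) P] [Module.Projective (MonoidAlgebra ℤ G) P]
    (n : ℕ) (bF : Module.Basis (Fin n) (MonoidAlgebra ℤ G) F)
    (hPrank : ∀ (𝔭 : Ideal (MonoidAlgebra ℤ G)) [𝔭.IsPrime],
      Module.finrank (Localization 𝔭.primeCompl) (LocalizedModule 𝔭.primeCompl P) = n)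
    (ι : P →ₗ[MonoidAlgebra ℤ G] F) (π : F →ₗ[MonoidAlgebra ℤ G] X)
    (hπ : Function.Surjective π) (hexact : Function.Exact ι π)
    (x : R) (hx : x ∈ nonZeroDivisors R)
    (hfitt : fittingIdeal0 R (R ⊗[MonoidAlgebra ℤ G] X) = Ideal.span {x}) :
    Function.Injective (LinearMap.baseChange R ι) ∧
      ∃ (m : ℕ) (s : (Fin m → R) →ₗ[R] (R ⊗[MonoidAlgebra ℤ G] X)),
        Function.Surjective s ∧ Module.Projective R (LinearMap.ker s) := by
  let Q := FractionRing R
  have hexactR := hexact.baseChange R hπ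
  have hπR : Function.Surjective (π.baseChange R) := LinearMap.baseChange_surjective R hπ
  have hXQ : Subsingleton (Q ⊗[R] (R ⊗[MonoidAlgebra ℤ G] X)) :=
    subsingleton_tensor_of_mem_annihilator (IsLocalization.map_units Q ⟨x, hx⟩)
      (fittingIdeal0_le_annihilator (hfitt ▸ Ideal.mem_span_singleton_self x))
  have hιQ : Function.Surjective ((ι.baseChange R).baseChange Q) :=
    (LinearMap.surjective_iff_eq_zero_of_exact (hexactR.baseChange Q hπR)).mpr
      (Subsingleton.elim _ _)
  have := Module.Free.of_basis bF
  have := Module.Finite.of_basis bF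
  have hrank : rankAtStalk (R := R) (R ⊗[MonoidAlgebra ℤ G] P) =
      rankAtStalk (R ⊗[MonoidAlgebra ℤ G] F) := by
    ext p
    rw [rankAtStalk_baseChange, rankAtStalk_baseChange, rankAtStalk_eq_finrank_of_free (M := F),
      finrank_eq_card_basis bF, Fintype.card_fin]
    exact hPrank _
  have hιR : Function.Injective (ι.baseChange R) :=
    (ι.baseChange R).injective_of_injective_baseChange_of_le_nonZeroDivisors le_rfl Q
      (LinearMap.injective_baseChange_of_rankAtStalk_eq hrank hιQ)
  exact ⟨hιR, exists_surjective_pi_with_projective_ker (Algebra.TensorProduct.basis R bF) hιR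
    hπR hexactR⟩

/-- Let `G` be a finite abelian group, `R` a quotient ring of `ℤ[G]` which
is free as a `ℤ`-module, and `P →^ι F → X → 0` exact with `F` free of rank `n` and `P`
projective of (constant local) rank `n` over `ℤ[G]`. If `Fitt_R(X_R) = xR` with `x` a
non-zero-divisor, then `ι_R : P_R → F_R` is injective; in particular `X_R` has projective
dimension `≤ 1`, witnessed by a length-one resolution. -/
theorem baseChange_injective_of_fitting_principal
    (G : Type*) [CommGroup G] [Finite G]
    (R : Type*) [CommRing R] [Algebra (MonoidAlgebra ℤ G) R]
    (hquot : Function.Surjective (algebraMap (MonoidAlgebra ℤ G) R))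
    [Module.Free ℤ R]
    (P F X : Type*)
    [AddCommGroup P] [Module (MonoidAlgebra ℤ G) P]
    [AddCommGroup F] [Module (MonoidAlgebra ℤ G) F]
    [AddCommGroup X] [Module (MonoidAlgebra ℤ G) X]
    [Module.Finite (MonoidAlgebra ℤ G) P] [Module.Projective (MonoidAlgebra ℤ G) P]
    (n : ℕ) (bF : Module.Basis (Fin n) (MonoidAlgebra ℤ G) F)
    (hPrank : ∀ (𝔭 : Ideal (MonoidAlgebra ℤ G)) [𝔭.IsPrime],
      Module.finrank (Localization 𝔭.primeCompl) (LocalizedModule 𝔭.primeCompl P) = n)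
    (ι : P →ₗ[MonoidAlgebra ℤ G] F) (π : F →ₗ[MonoidAlgebra ℤ G] X)
    (hπ : Function.Surjective π) (hexact : Function.Exact ι π)
    (x : R) (hx : x ∈ nonZeroDivisors R)
    (hfitt : fittingIdeal0 R (R ⊗[MonoidAlgebra ℤ G] X) = Ideal.span {x}) :
    Function.Injective (LinearMap.baseChange R ι) ∧
      ∃ (m : ℕ) (s : (Fin m → R) →ₗ[R] (R ⊗[MonoidAlgebra ℤ G] X)),
        Function.Surjective s ∧ Module.Projective R (LinearMap.ker s) :=
  baseChange_injective_of_fitting_principal_general G R P F X n bF hPrank ι π hπ hexact x hx hfitt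
end

section
/- Let G be a finite abelian group with a direct product decomposition of a subgroup G_v = ⟨g₁⟩ × ⋯ × ⟨g_r⟩, let R = ℤ_p[G], β_i = g_i − 1 and α_i = N(⟨g_i⟩) = Σ_k g_i^k. For each 1 ≤ k ≤ r, the R-module K_k = {(y₁,…,y_k) ∈ R^k : Σ_{i=1}^k y_i β_i = 0} is generated by the k(k+1)/2 vectors {α_i e_i : 1 ≤ i ≤ k} ∪ {−β_j e_i + β_i e_j : 1 ≤ i < j ≤ k}, where (e_i) is the standard basis of R^k. -/
/-!
Peeling off the last nonzero coordinate `y_j` of a relation `∑ yᵢ βᵢ = 0` shows that the relations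
are generated by the listed vectors as soon as each `β_j` is as regular as possible modulo the
earlier ones: `x β_j ∈ (β_i : i < j)` forces `x ∈ (α_j) + (β_i : i < j)`.
In `ℤ_p[G]` the ideal `(β_i : i < j)` is the kernel of `ℤ_p[G] → ℤ_p[G/H]` with
`H = ⟨g_i : i < j⟩`, so the condition says that in `ℤ_p[G/H]` an element killed by `g_j - 1` is a
multiple of the norm of `⟨g_j⟩`. Such an element is constant on the cosets of `⟨g_j⟩`, and `g_j`
keeps its order in `G/H` because the `g_i` are independent.
-/

section Syzygies

variable {R : Type*} [CommRing R] {k : ℕ} (α β : Fin k → R)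

def syzygyGenerators : Set (Fin k → R) :=
  (Set.range fun i : Fin k => Pi.single i (α i)) ∪
    {y | ∃ i j : Fin k, i < j ∧ y = Pi.single i (-(β j)) + Pi.single j (β i)}

variable {α β}

lemma mem_ker_linearCombination_iff_sum_mul_eq_zero {y : Fin k → R} :
    y ∈ LinearMap.ker (Fintype.linearCombination R β) ↔ ∑ i, y i * β i = 0 := by
  simp [Fintype.linearCombination_apply]

lemma span_syzygyGenerators_le_ker (hαβ : ∀ i, α i * β i = 0) :
    Submodule.span R (syzygyGenerators α β) ≤ LinearMap.ker (Fintype.linearCombination R β) := by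
  classical
  refine Submodule.span_le.mpr ?_
  rintro _ (⟨i, rfl⟩ | ⟨i, j, -, rfl⟩) <;>
    simp [Fintype.linearCombination_apply_single, hαβ, mul_comm]

lemma exists_mem_span_syzygyGenerators_apply_eq (j : Fin k) {x : R}
    (hx : x ∈ Ideal.span (insert (α j) (β '' Set.Iio j))) :
    ∃ v ∈ Submodule.span R (syzygyGenerators α β), v j = x ∧ ∀ i, j < i → v i = 0 := by
  classical
  induction hx using Submodule.span_induction with
  | mem x hx =>
    rcases hx with rfl | ⟨i, hij : i < j, rfl⟩
    · refine ⟨Pi.single j (α j), Submodule.subset_span (Or.inl ⟨j, rfl⟩), by simp, ?_⟩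
      intro i hji
      simp [hji.ne']
    · refine ⟨Pi.single i (-(β j)) + Pi.single j (β i),
        Submodule.subset_span (Or.inr ⟨i, j, hij, rfl⟩), by simp [hij.ne], ?_⟩
      intro l hjl
      simp [hjl.ne', (hij.trans hjl).ne']
  | zero => exact ⟨0, zero_mem _, rfl, fun _ _ => rfl⟩
  | add x y _ _ hx hy =>
    obtain ⟨v, hv, hvj, hv0⟩ := hx
    obtain ⟨w, hw, hwj, hw0⟩ := hy
    exact ⟨v + w, add_mem hv hw, by simp [hvj, hwj], fun i hi => by simp [hv0 i hi, hw0 i hi]⟩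
  | smul c x _ hx =>
    obtain ⟨v, hv, hvj, hv0⟩ := hx
    exact ⟨c • v, Submodule.smul_mem _ c hv, by simp [hvj], fun i hi => by simp [hv0 i hi]⟩

lemma mul_mem_span_of_mem_ker {y : Fin k → R}
    (hy : y ∈ LinearMap.ker (Fintype.linearCombination R β)) (j : Fin k)
    (hyj : ∀ i, j < i → y i = 0) :
    y j * β j ∈ Ideal.span (β '' Set.Iio j) := by
  classical
  have hterm : ∀ i ∈ Finset.univ.erase j, y i * β i ∈ Ideal.span (β '' Set.Iio j) := by
    intro i hi
    rcases lt_or_gt_of_ne (Finset.ne_of_mem_erase hi) with hij | hji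
    · exact Ideal.mul_mem_left _ _ (Ideal.subset_span ⟨i, hij, rfl⟩)
    · simp [hyj i hji]
  have hsum := mem_ker_linearCombination_iff_sum_mul_eq_zero.mp hy
  rw [← Finset.add_sum_erase _ _ (Finset.mem_univ j), add_eq_zero_iff_eq_neg] at hsum
  exact hsum ▸ neg_mem (Ideal.sum_mem _ hterm)

theorem ker_le_span_syzygyGenerators (hαβ : ∀ i, α i * β i = 0)
    (hcolon : ∀ j x, x * β j ∈ Ideal.span (β '' Set.Iio j) →
      x ∈ Ideal.span (insert (α j) (β '' Set.Iio j))) :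
    LinearMap.ker (Fintype.linearCombination R β) ≤ Submodule.span R (syzygyGenerators α β) := by
  suffices h : ∀ m : ℕ, ∀ y ∈ LinearMap.ker (Fintype.linearCombination R β),
      (∀ i : Fin k, m ≤ i → y i = 0) → y ∈ Submodule.span R (syzygyGenerators α β) from
    fun y hy => h k y hy fun i hi => absurd i.isLt (not_lt.mpr hi)
  intro m
  induction m with
  | zero =>
    intro y _ hy
    rw [show y = 0 from funext fun i => hy i (Nat.zero_le _)]
    exact zero_mem _
  | succ m ih =>
    intro y hy hym
    by_cases hm : m < k
    · set j : Fin k := ⟨m, hm⟩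
      obtain ⟨v, hv, hvj, hv0⟩ := exists_mem_span_syzygyGenerators_apply_eq j
        (hcolon j _ (mul_mem_span_of_mem_ker hy j hym))
      have hyv : y - v ∈ Submodule.span R (syzygyGenerators α β) := by
        refine ih _ (sub_mem hy (span_syzygyGenerators_le_ker hαβ hv)) fun i hi => ?_
        rcases (Nat.lt_or_eq_of_le hi).symm with hi | hi
        · rw [Pi.sub_apply, show i = j from Fin.ext hi.symm, hvj, sub_self]
        · rw [Pi.sub_apply, hym i hi, hv0 i hi, sub_self]
      simpa using add_mem hyv hv
    · exact ih y hy fun i hi => absurd i.isLt (by omega)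

theorem coe_span_syzygyGenerators (hαβ : ∀ i, α i * β i = 0)
    (hcolon : ∀ j x, x * β j ∈ Ideal.span (β '' Set.Iio j) →
      x ∈ Ideal.span (insert (α j) (β '' Set.Iio j))) :
    (Submodule.span R (syzygyGenerators α β) : Set (Fin k → R)) = {y | ∑ i, y i * β i = 0} := by
  rw [le_antisymm (span_syzygyGenerators_le_ker hαβ) (ker_le_span_syzygyGenerators hαβ hcolon)]
  ext y
  exact mem_ker_linearCombination_iff_sum_mul_eq_zero

end Syzygies

namespace MonoidAlgebra

variable (A : Type*) [CommRing A] {Q : Type*} [CommGroup Q]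

noncomputable def normElement (q : Q) : MonoidAlgebra A Q :=
  ∑ m ∈ Finset.range (orderOf q), of A Q (q ^ m)

variable {A}

lemma normElement_mul_of_sub_one (q : Q) : normElement A q * (of A Q q - 1) = 0 := by
  simp only [normElement, map_pow]
  rw [geom_sum_mul, ← map_pow, pow_orderOf_eq_one, map_one, sub_self]

lemma coeff_mul_pow_eq_of_mul_of_sub_one_eq_zero {q : Q} {x : MonoidAlgebra A Q}
    (hx : x * (of A Q q - 1) = 0) (a : Q) (m : ℕ) : x.coeff (a * q ^ m) = x.coeff a := by
  have hxq : x * single q 1 = x := by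
    rwa [mul_sub, mul_one, sub_eq_zero] at hx
  induction m with
  | zero => simp
  | succ m ih =>
    have := congrArg (fun z => z.coeff (a * q ^ (m + 1))) hxq
    simp only [coeff_mul_single_apply, mul_one] at this
    rw [← this, pow_succ, ← mul_assoc, mul_inv_cancel_right, ih]

lemma exists_eq_mul_normElement_of_mul_of_sub_one_eq_zero {q : Q} (hq : IsOfFinOrder q)
    {x : MonoidAlgebra A Q} (hx : x * (of A Q q - 1) = 0) : ∃ y, x = y * normElement A q := by
  classical
  let rep : Q → Q := fun a => (QuotientGroup.mk a : Q ⧸ Subgroup.zpowers q).out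
  have hrep : ∀ a, ∃ m < orderOf q, a = rep a * q ^ m := by
    intro a
    have hmem : (rep a)⁻¹ * a ∈ Subgroup.zpowers q := QuotientGroup.eq.mp (Quotient.out_eq _)
    obtain ⟨m, hm, hqm⟩ := Finset.mem_image.mp (hq.mem_zpowers_iff_mem_range_orderOf.mp hmem)
    exact ⟨m, Finset.mem_range.mp hm, by rw [hqm, mul_inv_cancel_left]⟩
  have hrep_mul : ∀ a (m : ℕ), rep (a * q ^ m) = rep a := fun a m =>
    congrArg Quotient.out (QuotientGroup.eq.mpr (by simp [Subgroup.pow_mem, Subgroup.mem_zpowers]))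
  -- keep the coefficients of `x` at the coset representatives only
  refine ⟨ofCoeff (x.coeff.filter fun b => rep b = b), ?_⟩
  ext a
  obtain ⟨m₀, hm₀, ha⟩ := hrep a
  have hcoeff : (ofCoeff (x.coeff.filter fun b => rep b = b) * normElement A q).coeff a =
      ∑ m ∈ Finset.range (orderOf q), (x.coeff.filter fun b => rep b = b) (a * (q ^ m)⁻¹) := by
    simp only [normElement, Finset.mul_sum, coeff_sum, Finsupp.finsetSum_apply, of_apply,
      coeff_mul_single_apply, mul_one]
  have hrep_a : rep (a * (q ^ m₀)⁻¹) = a * (q ^ m₀)⁻¹ := by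
    rw [ha, mul_inv_cancel_right, ← hrep_mul (rep a) m₀, ← ha]
  rw [hcoeff, Finset.sum_eq_single_of_mem m₀ (Finset.mem_range.mpr hm₀),
    Finsupp.filter_apply_pos (p := fun b => rep b = b) _ hrep_a]
  · rw [← coeff_mul_pow_eq_of_mul_of_sub_one_eq_zero hx (a * (q ^ m₀)⁻¹) m₀, inv_mul_cancel_right]
  · intro m hm hne
    refine Finsupp.filter_apply_neg (p := fun b => rep b = b) _ fun hrep_m => hne ?_
    have hqm : q ^ m = q ^ m₀ := by
      have h : rep a = a * (q ^ m)⁻¹ := by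
        rw [← hrep_m, ← hrep_mul (a * (q ^ m)⁻¹) m, inv_mul_cancel_right]
      rwa [h, mul_assoc, left_eq_mul, inv_mul_eq_one] at ha
    exact pow_injOn_Iio_orderOf (Finset.mem_range.mp hm) hm₀ hqm

lemma mapDomainRingHom_of {M N : Type*} [Monoid M] [Monoid N] (f : M →* N) (m : M) :
    mapDomainRingHom A f (of A M m) = of A N (f m) := by
  simp

lemma mapDomainRingHom_surjective {M N : Type*} [Monoid M] [Monoid N] {f : M →* N}
    (hf : Function.Surjective f) : Function.Surjective (mapDomainRingHom A f) := fun y =>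
  let ⟨c, hc⟩ := Finsupp.mapDomain_surjective hf y.coeff
  ⟨ofCoeff c, by ext; simp [hc]⟩

variable {Γ : Type*} [CommGroup Γ]

lemma of_sub_one_mem_span_of_mem_closure {s : Set Γ} {h : Γ} (hh : h ∈ Subgroup.closure s) :
    of A Γ h - 1 ∈ Ideal.span ((fun t => of A Γ t - 1) '' s) := by
  induction hh using Subgroup.closure_induction with
  | mem t ht => exact Ideal.subset_span ⟨t, ht, rfl⟩
  | one => simp only [map_one, sub_self, zero_mem]
  | mul a b _ _ ha hb =>
    have : of A Γ (a * b) - 1 = of A Γ a * (of A Γ b - 1) + (of A Γ a - 1) := by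
      rw [map_mul]; ring
    exact this ▸ add_mem (Ideal.mul_mem_left _ _ hb) ha
  | inv a _ ha =>
    have : of A Γ a⁻¹ - 1 = -of A Γ a⁻¹ * (of A Γ a - 1) := by
      rw [neg_mul, mul_sub, ← map_mul, inv_mul_cancel, map_one]; ring
    exact this ▸ Ideal.mul_mem_left _ _ ha

lemma ker_mapDomainRingHom_mk'_closure (s : Set Γ) :
    RingHom.ker (mapDomainRingHom A (QuotientGroup.mk' (Subgroup.closure s))) =
      Ideal.span ((fun t => of A Γ t - 1) '' s) := by
  set π := mapDomainRingHom A (QuotientGroup.mk' (Subgroup.closure s))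
  refine le_antisymm (fun f hf => ?_) (Ideal.span_le.mpr ?_)
  · -- `lift ∘ π` moves each `a` to its coset representative `b`, changing `f` by `b (b⁻¹ a - 1)`
    let lift : MonoidAlgebra A (Γ ⧸ Subgroup.closure s) → MonoidAlgebra A Γ :=
      mapDomain Quotient.out
    suffices h : ∀ f, f - lift (π f) ∈ Ideal.span ((fun t => of A Γ t - 1) '' s) by
      simpa [RingHom.mem_ker.mp hf, lift] using h f
    intro f
    induction f using MonoidAlgebra.induction_linear with
    | zero => simp [lift]
    | add f₁ f₂ h₁ h₂ =>
      simpa only [map_add, lift, mapDomain_add, add_sub_add_comm] using add_mem h₁ h₂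
    | single a r =>
      set b : Γ := (QuotientGroup.mk a : Γ ⧸ Subgroup.closure s).out
      have hb : b⁻¹ * a ∈ Subgroup.closure s := QuotientGroup.eq.mp (Quotient.out_eq _)
      have : single a r - lift (π (single a r)) = single b r * (of A Γ (b⁻¹ * a) - 1) := by
        simp [π, lift, b, mul_sub, single_mul_single]
      exact this ▸ Ideal.mul_mem_left _ _ (of_sub_one_mem_span_of_mem_closure hb)
  · rintro _ ⟨t, ht, rfl⟩
    have : (QuotientGroup.mk t : Γ ⧸ Subgroup.closure s) = 1 :=
      (QuotientGroup.eq_one_iff t).mpr (Subgroup.subset_closure ht)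
    rw [SetLike.mem_coe, RingHom.mem_ker, map_sub, map_one, sub_eq_zero]
    simp [π, this, one_def]

lemma orderOf_mk_of_disjoint {g₀ : Γ} {H : Subgroup Γ} (hdisj : Disjoint (Subgroup.zpowers g₀) H) :
    orderOf (g₀ : Γ ⧸ H) = orderOf g₀ := by
  refine orderOf_eq_orderOf_iff.mpr fun n => ?_
  rw [← QuotientGroup.mk_pow, QuotientGroup.eq_one_iff]
  exact ⟨fun h => Subgroup.disjoint_def.mp hdisj (Subgroup.pow_mem _ (Subgroup.mem_zpowers g₀) n) h,
    fun h => h ▸ H.one_mem⟩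

lemma mapDomainRingHom_mk'_normElement {g₀ : Γ} {H : Subgroup Γ}
    (hdisj : Disjoint (Subgroup.zpowers g₀) H) :
    mapDomainRingHom A (QuotientGroup.mk' H) (normElement A g₀) = normElement A (g₀ : Γ ⧸ H) := by
  simp [normElement, orderOf_mk_of_disjoint hdisj]

theorem mem_span_insert_normElement_of_mul_mem_span {g₀ : Γ} (hg₀ : IsOfFinOrder g₀) {s : Set Γ}
    (hdisj : Disjoint (Subgroup.zpowers g₀) (Subgroup.closure s)) {x : MonoidAlgebra A Γ}
    (hx : x * (of A Γ g₀ - 1) ∈ Ideal.span ((fun t => of A Γ t - 1) '' s)) :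
    x ∈ Ideal.span (insert (normElement A g₀) ((fun t => of A Γ t - 1) '' s)) := by
  set π := mapDomainRingHom A (QuotientGroup.mk' (Subgroup.closure s))
  rw [← ker_mapDomainRingHom_mk'_closure, RingHom.mem_ker, map_mul, map_sub, map_one,
    mapDomainRingHom_of] at hx
  obtain ⟨y, hy⟩ := exists_eq_mul_normElement_of_mul_of_sub_one_eq_zero
    ((QuotientGroup.mk' _).isOfFinOrder hg₀) hx
  obtain ⟨y₀, rfl⟩ := mapDomainRingHom_surjective (QuotientGroup.mk'_surjective _) y
  have hker : x - y₀ * normElement A g₀ ∈ RingHom.ker π := by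
    rw [RingHom.mem_ker, map_sub, map_mul, mapDomainRingHom_mk'_normElement hdisj]
    exact sub_eq_zero.mpr hy
  rw [ker_mapDomainRingHom_mk'_closure] at hker
  exact Ideal.mem_span_insert.mpr ⟨y₀, _, hker, by ring⟩

end MonoidAlgebra

lemma disjoint_zpowers_closure_image_of_injective_prod {Γ ι : Type*} [CommGroup Γ] [Fintype ι]
    {g : ι → Γ} (hindep : Function.Injective
      (fun x : (∀ i, Subgroup.zpowers (g i)) => ∏ i, (x i : Γ)))
    {j : ι} {s : Set ι} (hj : j ∉ s) :
    Disjoint (Subgroup.zpowers (g j)) (Subgroup.closure (g '' s)) := by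
  classical
  let φ : (∀ i, Subgroup.zpowers (g i)) →* Γ :=
    { toFun x := ∏ i, (x i : Γ)
      map_one' := by simp
      map_mul' x y := by simp [Finset.prod_mul_distrib] }
  have hφ_single : ∀ i (a : Subgroup.zpowers (g i)), φ (Pi.mulSingle i a) = a := fun i a => by
    refine (Finset.prod_eq_single_of_mem i (Finset.mem_univ i) fun l _ hl => ?_).trans ?_
    · simp [Pi.mulSingle_eq_of_ne hl]
    · simp
  have hclosure : Subgroup.closure (g '' s) ≤ (MonoidHom.ker (Pi.evalMonoidHom _ j)).map φ := by
    rw [Subgroup.closure_le]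
    rintro _ ⟨i, hi, rfl⟩
    refine ⟨Pi.mulSingle i ⟨g i, Subgroup.mem_zpowers _⟩, ?_, hφ_single _ _⟩
    simp [Pi.mulSingle_eq_of_ne (ne_of_mem_of_not_mem hi hj).symm]
  refine Subgroup.disjoint_def.mpr fun {h} hpow hcl => ?_
  obtain ⟨x, hxj, rfl⟩ := hclosure hcl
  have hx : x = Pi.mulSingle j ⟨φ x, hpow⟩ := hindep (hφ_single j ⟨φ x, hpow⟩).symm
  rw [SetLike.mem_coe, MonoidHom.mem_ker, Pi.evalMonoidHom_apply, hx, Pi.mulSingle_eq_same] at hxj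
  exact congrArg Subtype.val hxj

open MonoidAlgebra in
/-- Let `R = ℤ_p[G]` with `G` finite abelian containing a subgroup
`G_v = ⟨g₁⟩ × ⋯ × ⟨g_r⟩` (internal direct product), `β_i = g_i - 1` and
`α_i = N(⟨g_i⟩)`. For each `k ≤ r`, the solution module
`K_k = {(y₁,…,y_k) ∈ R^k : Σ y_i β_i = 0}` is generated by the vectors
`α_i e_i` (`1 ≤ i ≤ k`) and `-β_j e_i + β_i e_j` (`1 ≤ i < j ≤ k`). -/
theorem relation_module_generators
    (p : ℕ) [Fact p.Prime]
    (G : Type*) [CommGroup G] [Fintype G]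
    (r : ℕ) (g : Fin r → G)
    (hindep : Function.Injective
      (fun x : (∀ i : Fin r, Subgroup.zpowers (g i)) => ∏ i, ((x i : G))))
    (k : ℕ) (hk : k ≤ r)
    (β α : Fin k → MonoidAlgebra ℤ_[p] G)
    (hβ : ∀ i, β i = MonoidAlgebra.of ℤ_[p] G (g (Fin.castLE hk i)) - 1)
    (hα : ∀ i, α i = ∑ m ∈ Finset.range (orderOf (g (Fin.castLE hk i))),
      MonoidAlgebra.of ℤ_[p] G ((g (Fin.castLE hk i)) ^ m)) :
    (Submodule.span (MonoidAlgebra ℤ_[p] G)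
        ((Set.range fun i : Fin k => Pi.single i (α i)) ∪
          {y | ∃ i j : Fin k, i < j ∧
            y = Pi.single i (-(β j)) + Pi.single j (β i)}) :
      Set (Fin k → MonoidAlgebra ℤ_[p] G)) =
      {y : Fin k → MonoidAlgebra ℤ_[p] G | ∑ i, y i * β i = 0} := by
  obtain rfl : β = fun i => of ℤ_[p] G (g (Fin.castLE hk i)) - 1 := funext hβ
  obtain rfl : α = fun i => normElement ℤ_[p] (g (Fin.castLE hk i)) := funext hα
  refine coe_span_syzygyGenerators (fun i => normElement_mul_of_sub_one _) fun j x hx => ?_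
  have himage : (fun i => of ℤ_[p] G (g (Fin.castLE hk i)) - 1) '' Set.Iio j =
      (fun t => of ℤ_[p] G t - 1) '' (g '' (Fin.castLE hk '' Set.Iio j)) := by
    simp only [Set.image_image]
  rw [himage] at hx ⊢
  refine mem_span_insert_normElement_of_mul_mem_span (isOfFinOrder_of_finite _)
    (disjoint_zpowers_closure_image_of_injective_prod hindep ?_) hx
  exact (Fin.castLE_injective hk).mem_set_image.not.mpr (lt_irrefl j)
end

section
/- Let 𝓡 = ℤ_p[x₁,…,x_k, y₁,…,y_k] and A_k the k × k(k+1)/2 matrix with columns y_i e_i (1 ≤ i ≤ k) and −x_j e_i + x_i e_j (1 ≤ i < j ≤ k). Then every nonzero monomial occurring in any k × k minor of A_k is either equal (up to sign) to y₁y₂⋯y_k or is divisible by x_i y_i for some i ∈ {1,…,k}. -/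
/-!
Let `d` be a monomial of a minor with no factor `x_i y_i`. Substituting `0` for the variables
absent from `d` keeps its coefficient, so the substituted minor is nonzero. After the substitution
`x_i y_i = 0` for every `i`, which makes the vector `x` a left null vector of `A_k`
(`-x_i x_j + x_j x_i = 0` on the remaining columns); over a domain this forces `x = 0`, so `d`
has no `x`-variables. Then a row `i` of the minor vanishes unless `y_i` occurs in `d`, and since
the minor is homogeneous of degree `k`, `d = y₁ ⋯ y_k`.
-/

open MvPolynomial

namespace MvPolynomial

variable {σ R : Type*} [CommSemiring R] [DecidableEq σ]

theorem aeval_ite_X_monomial (s : Finset σ) (m : σ →₀ ℕ) (a : R) :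
    aeval (fun v => if v ∈ s then X v else 0) (monomial m a) =
      if m.support ⊆ s then monomial m a else 0 := by
  rw [aeval_monomial, monomial_eq, Finsupp.prod]
  split_ifs with hm
  · congr 1
    exact Finset.prod_congr rfl fun v hv => by rw [if_pos (hm hv)]
  · obtain ⟨v, hvm, hvs⟩ := Finset.not_subset.mp hm
    rw [Finset.prod_eq_zero hvm (by rw [if_neg hvs, zero_pow (Finsupp.mem_support_iff.mp hvm)]),
      mul_zero]

theorem coeff_aeval_ite_X {s : Finset σ} {d : σ →₀ ℕ} (hd : d.support ⊆ s)
    (P : MvPolynomial σ R) :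
    coeff d (aeval (fun v => if v ∈ s then X v else 0) P) = coeff d P := by
  induction P using MvPolynomial.induction_on' with
  | monomial m a =>
    rw [aeval_ite_X_monomial]
    split_ifs with hm
    · rfl
    · rw [coeff_zero, coeff_monomial, if_neg]
      rintro rfl
      exact hm hd
  | add P Q hP hQ => rw [map_add, coeff_add, coeff_add, hP, hQ]

end MvPolynomial

theorem Matrix.isHomogeneous_det {n σ R : Type*} [Fintype n] [DecidableEq n] [CommRing R]
    (M : Matrix n n (MvPolynomial σ R)) (hM : ∀ i j, (M i j).IsHomogeneous 1) :
    M.det.IsHomogeneous (Fintype.card n) := by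
  rw [det_apply]
  refine IsHomogeneous.sum _ _ _ fun e _ => ?_
  have hprod := IsHomogeneous.prod Finset.univ (fun i => M (e i) i) (fun _ => 1)
    fun i _ => hM _ _
  rw [Finset.sum_const, smul_eq_mul, mul_one, Finset.card_univ] at hprod
  rcases Int.units_eq_one_or (Equiv.Perm.sign e) with h | h
  · rwa [h, one_smul]
  · rw [h, Units.neg_smul, one_smul]
    exact hprod.neg

section MatrixA

open Matrix

variable {R S : Type*} [CommRing R] [CommRing S] {k : ℕ}

/-- The matrix `A_k`, with the columns `y_i e_i` indexed by `Sum.inl i` and the columns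
`-x_j e_i + x_i e_j` indexed by `Sum.inr ⟨(i, j), _⟩`. -/
def matrixA (x y : Fin k → R) : Matrix (Fin k) (Fin k ⊕ {q : Fin k × Fin k // q.1 < q.2}) R :=
  of fun i => Sum.elim (fun j => if i = j then y j else 0)
    fun c => (if i = c.1.1 then -x c.1.2 else 0) + (if i = c.1.2 then x c.1.1 else 0)

variable {x y : Fin k → R}

@[simp]
theorem matrixA_inl (i j : Fin k) : matrixA x y i (.inl j) = if i = j then y j else 0 := rfl

@[simp]
theorem matrixA_inr (i : Fin k) (c : {q : Fin k × Fin k // q.1 < q.2}) :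
    matrixA x y i (.inr c) =
      (if i = c.1.1 then -x c.1.2 else 0) + (if i = c.1.2 then x c.1.1 else 0) := rfl

theorem matrixA_map {F : Type*} [FunLike F R S] [RingHomClass F R S] (f : F) :
    (matrixA x y).map f = matrixA (f ∘ x) (f ∘ y) := by
  ext i (j | c) <;> simp [apply_ite f]

theorem isHomogeneous_matrixA {σ : Type*} {x y : Fin k → MvPolynomial σ R} {n : ℕ}
    (hx : ∀ i, (x i).IsHomogeneous n) (hy : ∀ i, (y i).IsHomogeneous n) (i) (c) :
    (matrixA x y i c).IsHomogeneous n := by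
  have h0 := isHomogeneous_zero σ R n
  rcases c with j | c
  · rw [matrixA_inl]
    split_ifs
    exacts [hy j, h0]
  · rw [matrixA_inr]
    refine .add ?_ ?_ <;> split_ifs
    exacts [(hx _).neg, h0, hx _, h0]

theorem vecMul_matrixA_eq_zero (h : ∀ i, x i * y i = 0) : x ᵥ* matrixA x y = 0 := by
  ext (j | c)
  · simp [vecMul, dotProduct, h]
  · simp [vecMul, dotProduct, mul_add, mul_ite, Finset.sum_add_distrib]
    ring

theorem det_submatrix_matrixA_eq_zero_of_mul_eq_zero [IsDomain R] (hx : x ≠ 0)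
    (h : ∀ i, x i * y i = 0) (sel : Fin k → Fin k ⊕ {q : Fin k × Fin k // q.1 < q.2}) :
    ((matrixA x y).submatrix id sel).det = 0 :=
  exists_vecMul_eq_zero_iff.mp
    ⟨x, hx, funext fun j => congrFun (vecMul_matrixA_eq_zero h) (sel j)⟩

theorem det_submatrix_matrixA_zero_eq_zero {i : Fin k} (hy : y i = 0)
    (sel : Fin k → Fin k ⊕ {q : Fin k × Fin k // q.1 < q.2}) :
    ((matrixA 0 y).submatrix id sel).det = 0 := by
  have hrow : ∀ c, matrixA 0 y i c = 0 := by
    rintro (t | c)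
    · rw [matrixA_inl]
      split_ifs with h
      exacts [h ▸ hy, rfl]
    · simp
  exact det_eq_zero_of_row_eq_zero i fun j => hrow (sel j)

end MatrixA

/-- Let `𝓡 = ℤ_p[x₁,…,x_k,y₁,…,y_k]` and `A_k` the `k × k(k+1)/2`
matrix with columns `y_i e_i` (`1 ≤ i ≤ k`) and `−x_j e_i + x_i e_j` (`1 ≤ i < j ≤ k`).
Then every nonzero monomial occurring in any `k × k` minor of `A_k` is either (up to sign)
`y₁y₂⋯y_k` or is divisible by `x_i y_i` for some `i`. -/
theorem monomials_of_minors_of_A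
    (p : ℕ) [Fact p.Prime] (k : ℕ)
    (x y : Fin k → MvPolynomial (Fin k ⊕ Fin k) ℤ_[p])
    (hx : ∀ i, x i = MvPolynomial.X (Sum.inl i))
    (hy : ∀ i, y i = MvPolynomial.X (Sum.inr i))
    (A : Matrix (Fin k) (Fin k ⊕ {q : Fin k × Fin k // q.1 < q.2})
      (MvPolynomial (Fin k ⊕ Fin k) ℤ_[p]))
    (hA₁ : ∀ (i j : Fin k), A i (Sum.inl j) = if i = j then y j else 0)
    (hA₂ : ∀ (i : Fin k) (c : {q : Fin k × Fin k // q.1 < q.2}),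
      A i (Sum.inr c) =
        (if i = c.1.1 then -(x c.1.2) else 0) + (if i = c.1.2 then x c.1.1 else 0)) :
    ∀ sel : Fin k → (Fin k ⊕ {q : Fin k × Fin k // q.1 < q.2}),
      Function.Injective sel →
        ∀ d ∈ ((Matrix.of fun i j => A i (sel j)).det).support,
          (∀ i : Fin k, d (Sum.inl i) = 0 ∧ d (Sum.inr i) = 1) ∨
            ∃ i : Fin k, 1 ≤ d (Sum.inl i) ∧ 1 ≤ d (Sum.inr i) := by
  intro sel _ d hd
  obtain rfl : A = matrixA x y := by ext i (j | c) <;> simp [hA₁, hA₂]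
  refine or_iff_not_imp_right.mpr fun hnone => ?_
  push Not at hnone
  set φ := aeval (R := ℤ_[p])
    fun v => if v ∈ d.support then (X v : MvPolynomial _ ℤ_[p]) else 0
  have hφX (v) : φ (X v) = if v ∈ d.support then X v else 0 := aeval_X _ v
  have hφdet : ((matrixA (φ ∘ x) (φ ∘ y)).submatrix id sel).det ≠ 0 := by
    rw [← matrixA_map, Matrix.submatrix_map, ← AlgHom.mapMatrix_apply, ← AlgHom.map_det]
    intro h0
    have hcoeff :=
      coeff_aeval_ite_X (R := ℤ_[p]) (d := d) subset_rfl ((matrixA x y).submatrix id sel).det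
    rw [h0, coeff_zero] at hcoeff
    exact mem_support_iff.mp hd hcoeff.symm
  have hxy (i) : φ (x i) * φ (y i) = 0 := by
    rw [hx, hy, hφX, hφX]
    split_ifs <;> simp_all [Nat.one_le_iff_ne_zero]
  have hφx : φ ∘ x = 0 := by
    by_contra h
    exact hφdet (det_submatrix_matrixA_eq_zero_of_mul_eq_zero h hxy sel)
  have hinl (i) : d (.inl i) = 0 := by
    simpa [hx, hφX] using congrFun hφx i
  have hinr (i) : d (.inr i) ≠ 0 := fun h =>
    hφdet (hφx ▸ det_submatrix_matrixA_zero_eq_zero (i := i) (by simp [hy, hφX, h]) sel)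
  have hdeg : ∑ i, d (.inr i) = k := by
    have hhom := Matrix.isHomogeneous_det _ fun i j =>
      isHomogeneous_matrixA (fun i => hx i ▸ isHomogeneous_X _ _)
        (fun i => hy i ▸ isHomogeneous_X _ _) i (sel j)
    have := hhom.degree_eq_sum_deg_support hd
    rw [← Finsupp.degree_apply, Finsupp.degree_eq_sum, Fintype.sum_sum_type] at this
    simpa [hinl] using this.symm
  have hone := (Finset.sum_eq_sum_iff_of_le (s := .univ) (f := fun _ => 1)
    fun i _ => Nat.one_le_iff_ne_zero.mpr (hinr i)).mp (by rw [hdeg]; simp)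
  exact fun i => ⟨hinl i, (hone i (Finset.mem_univ i)).symm⟩
end
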